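/- Let (φ, F) : (𝒱, 𝔟) → (𝒰, 𝔞) be a subcartesian graded functor between map-graded categories, M an 𝔞-bimodule, and n a natural number. Call (φ,F) n-injective (resp. n-surjective) if the induced map 𝒩_k(F) : 𝒩_k(𝔟) → 𝒩_k(𝔞) on k-simplices of nerves is injective (resp. surjective) for every k ≤ n. Then: (1) if (φ, F) is n-injective, the map (F*)^n : C^n_𝒰(𝔞, M) → C^n_𝒱(𝔟, F*M) is surjective; (2) if (φ, F) is n-surjective, the map (F*)^n is injective. -/

import Mathlib

open CategoryTheory

universe u

namespace MapGr

variable (k : Type u) [CommRing k]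

/-- A (`k`-linear) map-graded category `(𝒰, 𝔞)`: a set `𝔞_U` of objects over every
`U ∈ 𝒰`, a `k`-module `𝔞_u(B, A)` of morphisms over every `u : U ⟶ U'` in `𝒰`, together
with associative, unital, `k`-bilinear composition maps. -/
structure GradedCat (𝒰 : Type u) [Category.{u} 𝒰] : Type (u + 1) where
  Obj : 𝒰 → Type u
  Hom : ∀ {X Y : 𝒰}, (X ⟶ Y) → Obj X → Obj Y → ModuleCat.{u} k
  comp : ∀ {X Y Z : 𝒰} {f : Y ⟶ Z} {g : X ⟶ Y} {C : Obj X} {B : Obj Y} {A : Obj Z},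
    Hom f B A → Hom g C B → Hom (g ≫ f) C A
  id : ∀ {X : 𝒰} (A : Obj X), Hom (𝟙 X) A A
  comp_add_left : ∀ {X Y Z : 𝒰} {f : Y ⟶ Z} {g : X ⟶ Y} {C : Obj X} {B : Obj Y}
    {A : Obj Z} (x x' : Hom f B A) (y : Hom g C B),
    comp (x + x') y = comp x y + comp x' y
  comp_add_right : ∀ {X Y Z : 𝒰} {f : Y ⟶ Z} {g : X ⟶ Y} {C : Obj X} {B : Obj Y}
    {A : Obj Z} (x : Hom f B A) (y y' : Hom g C B),
    comp x (y + y') = comp x y + comp x y'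
  comp_smul_left : ∀ {X Y Z : 𝒰} {f : Y ⟶ Z} {g : X ⟶ Y} {C : Obj X} {B : Obj Y}
    {A : Obj Z} (r : k) (x : Hom f B A) (y : Hom g C B),
    comp (r • x) y = r • comp x y
  comp_smul_right : ∀ {X Y Z : 𝒰} {f : Y ⟶ Z} {g : X ⟶ Y} {C : Obj X} {B : Obj Y}
    {A : Obj Z} (r : k) (x : Hom f B A) (y : Hom g C B),
    comp x (r • y) = r • comp x y
  comp_id : ∀ {X Y : 𝒰} {f : X ⟶ Y} {B : Obj X} {A : Obj Y} (x : Hom f B A),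
    HEq (comp x (id B)) x
  id_comp : ∀ {X Y : 𝒰} {f : X ⟶ Y} {B : Obj X} {A : Obj Y} (x : Hom f B A),
    HEq (comp (id A) x) x
  assoc : ∀ {W X Y Z : 𝒰} {f : Y ⟶ Z} {g : X ⟶ Y} {h : W ⟶ X} {D : Obj W} {C : Obj X}
    {B : Obj Y} {A : Obj Z} (x : Hom f B A) (y : Hom g C B) (z : Hom h D C),
    HEq (comp (comp x y) z) (comp x (comp y z))

variable {k}
variable {𝒰 : Type u} [Category.{u} 𝒰]

namespace GradedCat

variable (𝔞 : GradedCat k 𝒰)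

/-- Transport of graded morphisms along an equality of underlying morphisms of `𝒰`. -/
def Hcast {X Y : 𝒰} {f g : X ⟶ Y} (h : f = g) {B : 𝔞.Obj X} {A : 𝔞.Obj Y}
    (x : 𝔞.Hom f B A) : 𝔞.Hom g B A :=
  _root_.cast (by rw [h]) x

theorem Hcast_heq {X Y : 𝒰} {f g : X ⟶ Y} (h : f = g) {B : 𝔞.Obj X} {A : 𝔞.Obj Y}
    (x : 𝔞.Hom f B A) : HEq (𝔞.Hcast h x) x :=
  cast_heq _ _

theorem Hcast_add {X Y : 𝒰} {f g : X ⟶ Y} (h : f = g) {B : 𝔞.Obj X} {A : 𝔞.Obj Y}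
    (x y : 𝔞.Hom f B A) : 𝔞.Hcast h (x + y) = 𝔞.Hcast h x + 𝔞.Hcast h y := by
  subst h; rfl

theorem Hcast_smul {X Y : 𝒰} {f g : X ⟶ Y} (h : f = g) {B : 𝔞.Obj X} {A : 𝔞.Obj Y}
    (r : k) (x : 𝔞.Hom f B A) : 𝔞.Hcast h (r • x) = r • 𝔞.Hcast h x := by
  subst h; rfl

theorem comp_congr {X Y Z : 𝒰} {f f' : Y ⟶ Z} (hf : f = f') {g g' : X ⟶ Y} (hg : g = g')
    {C : 𝔞.Obj X} {B : 𝔞.Obj Y} {A : 𝔞.Obj Z} {x : 𝔞.Hom f B A} {x' : 𝔞.Hom f' B A}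
    (hx : HEq x x') {y : 𝔞.Hom g C B} {y' : 𝔞.Hom g' C B} (hy : HEq y y') :
    HEq (𝔞.comp x y) (𝔞.comp x' y') := by
  subst hf; subst hg; rw [eq_of_heq hx, eq_of_heq hy]

end GradedCat

variable {𝒱 : Type u} [Category.{u} 𝒱]

/-- The `𝒱`-graded category `𝔞^φ` obtained by restricting a `𝒰`-graded category `𝔞`
along a functor `φ : 𝒱 ⥤ 𝒰`:  `(𝔞^φ)_V = 𝔞_{φ V}` and `(𝔞^φ)_v(A, A') = 𝔞_{φ v}(A, A')`. -/
def GradedCat.restrict (φ : 𝒱 ⥤ 𝒰) (𝔞 : GradedCat k 𝒰) : GradedCat k 𝒱 where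
  Obj V := 𝔞.Obj (φ.obj V)
  Hom f B A := 𝔞.Hom (φ.map f) B A
  comp x y := 𝔞.Hcast (φ.map_comp _ _).symm (𝔞.comp x y)
  id A := 𝔞.Hcast (φ.map_id _).symm (𝔞.id A)
  comp_add_left x x' y := by (try dsimp only); rw [𝔞.comp_add_left, 𝔞.Hcast_add]
  comp_add_right x y y' := by (try dsimp only); rw [𝔞.comp_add_right, 𝔞.Hcast_add]
  comp_smul_left r x y := by (try dsimp only); rw [𝔞.comp_smul_left, 𝔞.Hcast_smul]
  comp_smul_right r x y := by (try dsimp only); rw [𝔞.comp_smul_right, 𝔞.Hcast_smul]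
  comp_id x :=
    ((𝔞.Hcast_heq _ _).trans
      ((𝔞.comp_congr rfl (φ.map_id _) HEq.rfl (𝔞.Hcast_heq _ _)).trans (𝔞.comp_id _)))
  id_comp x :=
    ((𝔞.Hcast_heq _ _).trans
      ((𝔞.comp_congr (φ.map_id _) rfl (𝔞.Hcast_heq _ _) HEq.rfl).trans (𝔞.id_comp _)))
  assoc x y z := by
    refine ((𝔞.Hcast_heq _ _).trans ?_).trans (𝔞.Hcast_heq _ _).symm
    refine ((𝔞.comp_congr (φ.map_comp _ _) rfl (𝔞.Hcast_heq _ _) HEq.rfl).trans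
      (𝔞.assoc _ _ _)).trans ?_
    exact 𝔞.comp_congr rfl (φ.map_comp _ _).symm HEq.rfl (𝔞.Hcast_heq _ _).symm

variable (k)

/-- A graded functor `(φ, F) : (𝒱, 𝔟) → (𝒰, 𝔞)` over a functor `φ : 𝒱 ⥤ 𝒰`: maps
`F_V : 𝔟_V → 𝔞_{φ V}` on objects and `k`-linear maps `𝔟_v(B, B') → 𝔞_{φ v}(F B, F B')`
on graded morphisms, preserving composition and identities. -/
structure GradedFunctor (φ : 𝒱 ⥤ 𝒰) (𝔟 : GradedCat k 𝒱) (𝔞 : GradedCat k 𝒰) :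
    Type u where
  obj : ∀ {V : 𝒱}, 𝔟.Obj V → 𝔞.Obj (φ.obj V)
  map : ∀ {V V' : 𝒱} (f : V ⟶ V') {B : 𝔟.Obj V} {B' : 𝔟.Obj V'},
    𝔟.Hom f B B' → 𝔞.Hom (φ.map f) (obj B) (obj B')
  map_add : ∀ {V V' : 𝒱} (f : V ⟶ V') {B : 𝔟.Obj V} {B' : 𝔟.Obj V'}
    (x y : 𝔟.Hom f B B'), map f (x + y) = map f x + map f y
  map_smul : ∀ {V V' : 𝒱} (f : V ⟶ V') {B : 𝔟.Obj V} {B' : 𝔟.Obj V'} (r : k)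
    (x : 𝔟.Hom f B B'), map f (r • x) = r • map f x
  map_id : ∀ {V : 𝒱} (B : 𝔟.Obj V), HEq (map (𝟙 V) (𝔟.id B)) (𝔞.id (obj B))
  map_comp : ∀ {V V' V'' : 𝒱} {f : V' ⟶ V''} {g : V ⟶ V'} {C : 𝔟.Obj V} {B : 𝔟.Obj V'}
    {A : 𝔟.Obj V''} (x : 𝔟.Hom f B A) (y : 𝔟.Hom g C B),
    HEq (map (g ≫ f) (𝔟.comp x y)) (𝔞.comp (map f x) (map g y))

variable {k}

namespace GradedFunctor

variable {φ : 𝒱 ⥤ 𝒰} {𝔟 : GradedCat k 𝒱} {𝔞 : GradedCat k 𝒰}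

theorem map_congr (F : GradedFunctor k φ 𝔟 𝔞) {V V' : 𝒱} {f g : V ⟶ V'} (hfg : f = g)
    {B : 𝔟.Obj V} {B' : 𝔟.Obj V'} {x : 𝔟.Hom f B B'} {y : 𝔟.Hom g B B'} (h : HEq x y) :
    HEq (F.map f x) (F.map g y) := by
  subst hfg; rw [eq_of_heq h]

/-- A graded functor is subcartesian (cartesian with respect to `Map → Mas`) iff all its
maps between graded `Hom`-modules are bijective. -/
def Subcartesian (F : GradedFunctor k φ 𝔟 𝔞) : Prop :=
  ∀ {V V' : 𝒱} (f : V ⟶ V') (B : 𝔟.Obj V) (B' : 𝔟.Obj V'),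
    Function.Bijective (fun x : 𝔟.Hom f B B' => F.map f x)

variable {𝒲 : Type u} [Category.{u} 𝒲] {ψ : 𝒲 ⥤ 𝒱} {𝔠 : GradedCat k 𝒲}

/-- Composition of graded functors. -/
def comp (F : GradedFunctor k φ 𝔟 𝔞) (G : GradedFunctor k ψ 𝔠 𝔟) :
    GradedFunctor k (ψ ⋙ φ) 𝔠 𝔞 where
  obj C := F.obj (G.obj C)
  map := fun {V V'} f {B B'} x => F.map (ψ.map f) (G.map f x)
  map_add := by intro V V' f B B' x y; (try dsimp only); rw [G.map_add, F.map_add]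
  map_smul := by intro V V' f B B' r x; (try dsimp only); rw [G.map_smul, F.map_smul]
  map_id B := (F.map_congr (ψ.map_id _) (G.map_id _)).trans (F.map_id _)
  map_comp x y := (F.map_congr (ψ.map_comp _ _) (G.map_comp _ _)).trans (F.map_comp _ _)

end GradedFunctor

/-- The canonical cartesian graded functor `δ^{φ,𝔞} : (𝒱, 𝔞^φ) → (𝒰, 𝔞)`. -/
def restrictProj (φ : 𝒱 ⥤ 𝒰) (𝔞 : GradedCat k 𝒰) :
    GradedFunctor k φ (𝔞.restrict φ) 𝔞 where
  obj A := A
  map := fun {V V'} _f {B B'} x => x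
  map_add := by intros; rfl
  map_smul := by intros; rfl
  map_id B := 𝔞.Hcast_heq (φ.map_id _).symm (𝔞.id B)
  map_comp x y := 𝔞.Hcast_heq (φ.map_comp _ _).symm (𝔞.comp x y)

theorem restrictProj_subcartesian (φ : 𝒱 ⥤ 𝒰) (𝔞 : GradedCat k 𝒰) :
    (restrictProj φ 𝔞).Subcartesian := by
  intro V V' f B B'
  constructor
  · intro a b h
    exact h
  · intro y
    exact ⟨y, rfl⟩

end MapGr

namespace MapGr

variable {k : Type u} [CommRing k]
variable {𝒰 : Type u} [Category.{u} 𝒰]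

/-- The category `𝒰^♯` associated to a `𝒰`-graded category `𝔞`: objects are pairs
`(U, A)` with `A ∈ 𝔞_U`, and morphisms `(U, A) → (U', A')` are the morphisms `U ⟶ U'`
of `𝒰`. -/
def Sh (𝔞 : GradedCat k 𝒰) : Type u := Σ X : 𝒰, 𝔞.Obj X

instance (𝔞 : GradedCat k 𝒰) : Category.{u} (Sh 𝔞) where
  Hom A B := A.1 ⟶ B.1
  id A := 𝟙 A.1
  comp f g := f ≫ g
  id_comp := by intros; simp
  comp_id := by intros; simp
  assoc := by intros; simp

/-- The underlying morphism of `𝒰` of a morphism of `𝒰^♯`. -/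
def Sh.base {𝔞 : GradedCat k 𝒰} {A B : Sh 𝔞} (f : A ⟶ B) : A.1 ⟶ B.1 := f

@[simp] theorem Sh.base_id {𝔞 : GradedCat k 𝒰} (A : Sh 𝔞) :
    Sh.base (𝟙 A) = 𝟙 A.1 := rfl

@[simp] theorem Sh.base_comp {𝔞 : GradedCat k 𝒰} {A B C : Sh 𝔞} (f : A ⟶ B) (g : B ⟶ C) :
    Sh.base (f ≫ g) = Sh.base f ≫ Sh.base g := rfl

/-- `n`-simplices of the simplicial nerve of a category with specified endpoints:
strings `X = X₀ → X₁ → ⋯ → Xₙ = Y` of `n` composable morphisms. -/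
inductive Pth (C : Type u) [Category.{u} C] : ℕ → C → C → Type u
  | nil (X : C) : Pth C 0 X X
  | cons {n : ℕ} {X Y Z : C} (f : X ⟶ Y) (p : Pth C n Y Z) : Pth C (n + 1) X Z

/-- The composite `|u| = uₙ₋₁ ⋯ u₁ u₀` of a string of composable morphisms. -/
def Pth.comp {C : Type u} [Category.{u} C] : ∀ {n : ℕ} {X Y : C}, Pth C n X Y → (X ⟶ Y)
  | _, _, _, .nil X => 𝟙 X
  | _, _, _, .cons f p => f ≫ p.comp

@[simp] theorem Pth.comp_nil {C : Type u} [Category.{u} C] (X : C) :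
    (Pth.nil X).comp = 𝟙 X := rfl

@[simp] theorem Pth.comp_cons {C : Type u} [Category.{u} C] {n : ℕ} {X Y Z : C}
    (f : X ⟶ Y) (p : Pth C n Y Z) : (Pth.cons f p).comp = f ≫ p.comp := rfl

/-- The map induced by a functor on simplices of the nerves. -/
def Pth.map {C D : Type u} [Category.{u} C] [Category.{u} D] (F : C ⥤ D) :
    ∀ {n : ℕ} {X Y : C}, Pth C n X Y → Pth D n (F.obj X) (F.obj Y)
  | _, _, _, .nil X => .nil _
  | _, _, _, .cons f p => .cons (F.map f) (p.map F)

theorem Pth.comp_map {C D : Type u} [Category.{u} C] [Category.{u} D] (F : C ⥤ D)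
    {n : ℕ} {X Y : C} (p : Pth C n X Y) : (p.map F).comp = F.map p.comp := by
  induction p with
  | nil => simp [Pth.map]
  | cons f p ih => simp [Pth.map, ih]

/-- The set of `n`-simplices of the nerve `𝒩(𝔞) = 𝒩(𝒰^♯)` of a graded category. -/
def NerveTot (C : Type u) [Category.{u} C] (m : ℕ) : Type u :=
  Σ (X : C) (Y : C), Pth C m X Y

/-- The map induced by a functor on the set of `n`-simplices of the nerves. -/
def NerveTot.map {C D : Type u} [Category.{u} C] [Category.{u} D] (F : C ⥤ D) {m : ℕ}
    (s : NerveTot C m) : NerveTot D m :=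
  ⟨F.obj s.1, F.obj s.2.1, Pth.map F s.2.2⟩

/-- A family of elements of the graded `Hom`-modules of `𝔞` lying over a simplex of the
nerve of `𝔞`. -/
inductive PthElts {k : Type u} [CommRing k] {𝒰 : Type u} [Category.{u} 𝒰]
    (𝔞 : GradedCat k 𝒰) : ∀ {n : ℕ} {X Y : Sh 𝔞}, Pth (Sh 𝔞) n X Y → Type u
  | nil (X : Sh 𝔞) : PthElts 𝔞 (Pth.nil X)
  | cons {n : ℕ} {X Y Z : Sh 𝔞} {f : X ⟶ Y} {p : Pth (Sh 𝔞) n Y Z}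
      (x : 𝔞.Hom (Sh.base f) X.2 Y.2) (e : PthElts 𝔞 p) : PthElts 𝔞 (Pth.cons f p)

variable (k)

/-- An `𝔞`-bimodule `M`: `k`-modules `M_u(B, A)` together with associative, unital,
`k`-bilinear left and right actions of `𝔞`. -/
structure Bimod {𝒰 : Type u} [Category.{u} 𝒰] (𝔞 : GradedCat k 𝒰) : Type (u + 1) where
  M : ∀ {X Y : 𝒰}, (X ⟶ Y) → 𝔞.Obj X → 𝔞.Obj Y → ModuleCat.{u} k
  actL : ∀ {X Y Z : 𝒰} {f : Y ⟶ Z} {g : X ⟶ Y} {B : 𝔞.Obj X} {A : 𝔞.Obj Y}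
    {A' : 𝔞.Obj Z}, 𝔞.Hom f A A' → M g B A → M (g ≫ f) B A'
  actR : ∀ {X Y Z : 𝒰} {f : Y ⟶ Z} {g : X ⟶ Y} {B' : 𝔞.Obj X} {B : 𝔞.Obj Y}
    {A : 𝔞.Obj Z}, M f B A → 𝔞.Hom g B' B → M (g ≫ f) B' A
  actL_add_left : ∀ {X Y Z : 𝒰} {f : Y ⟶ Z} {g : X ⟶ Y} {B : 𝔞.Obj X} {A : 𝔞.Obj Y}
    {A' : 𝔞.Obj Z} (x x' : 𝔞.Hom f A A') (m : M g B A),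
    actL (x + x') m = actL x m + actL x' m
  actL_add_right : ∀ {X Y Z : 𝒰} {f : Y ⟶ Z} {g : X ⟶ Y} {B : 𝔞.Obj X} {A : 𝔞.Obj Y}
    {A' : 𝔞.Obj Z} (x : 𝔞.Hom f A A') (m m' : M g B A),
    actL x (m + m') = actL x m + actL x m'
  actL_smul_left : ∀ {X Y Z : 𝒰} {f : Y ⟶ Z} {g : X ⟶ Y} {B : 𝔞.Obj X} {A : 𝔞.Obj Y}
    {A' : 𝔞.Obj Z} (r : k) (x : 𝔞.Hom f A A') (m : M g B A),
    actL (r • x) m = r • actL x m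
  actL_smul_right : ∀ {X Y Z : 𝒰} {f : Y ⟶ Z} {g : X ⟶ Y} {B : 𝔞.Obj X} {A : 𝔞.Obj Y}
    {A' : 𝔞.Obj Z} (r : k) (x : 𝔞.Hom f A A') (m : M g B A),
    actL x (r • m) = r • actL x m
  actR_add_left : ∀ {X Y Z : 𝒰} {f : Y ⟶ Z} {g : X ⟶ Y} {B' : 𝔞.Obj X} {B : 𝔞.Obj Y}
    {A : 𝔞.Obj Z} (m m' : M f B A) (y : 𝔞.Hom g B' B),
    actR (m + m') y = actR m y + actR m' y
  actR_add_right : ∀ {X Y Z : 𝒰} {f : Y ⟶ Z} {g : X ⟶ Y} {B' : 𝔞.Obj X} {B : 𝔞.Obj Y}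
    {A : 𝔞.Obj Z} (m : M f B A) (y y' : 𝔞.Hom g B' B),
    actR m (y + y') = actR m y + actR m y'
  actR_smul_left : ∀ {X Y Z : 𝒰} {f : Y ⟶ Z} {g : X ⟶ Y} {B' : 𝔞.Obj X} {B : 𝔞.Obj Y}
    {A : 𝔞.Obj Z} (r : k) (m : M f B A) (y : 𝔞.Hom g B' B),
    actR (r • m) y = r • actR m y
  actR_smul_right : ∀ {X Y Z : 𝒰} {f : Y ⟶ Z} {g : X ⟶ Y} {B' : 𝔞.Obj X} {B : 𝔞.Obj Y}
    {A : 𝔞.Obj Z} (r : k) (m : M f B A) (y : 𝔞.Hom g B' B),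
    actR m (r • y) = r • actR m y
  actL_id : ∀ {X Y : 𝒰} {g : X ⟶ Y} {B : 𝔞.Obj X} {A : 𝔞.Obj Y} (m : M g B A),
    HEq (actL (𝔞.id A) m) m
  actR_id : ∀ {X Y : 𝒰} {f : X ⟶ Y} {B : 𝔞.Obj X} {A : 𝔞.Obj Y} (m : M f B A),
    HEq (actR m (𝔞.id B)) m
  actL_actL : ∀ {W X Y Z : 𝒰} {f' : Y ⟶ Z} {f : X ⟶ Y} {g : W ⟶ X} {B : 𝔞.Obj W}
    {A : 𝔞.Obj X} {A' : 𝔞.Obj Y} {A'' : 𝔞.Obj Z} (x : 𝔞.Hom f' A' A'')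
    (y : 𝔞.Hom f A A') (m : M g B A),
    HEq (actL x (actL y m)) (actL (𝔞.comp x y) m)
  actR_actR : ∀ {W X Y Z : 𝒰} {f : Y ⟶ Z} {g : X ⟶ Y} {h : W ⟶ X} {B'' : 𝔞.Obj W}
    {B' : 𝔞.Obj X} {B : 𝔞.Obj Y} {A : 𝔞.Obj Z} (m : M f B A) (y : 𝔞.Hom g B' B)
    (y' : 𝔞.Hom h B'' B'),
    HEq (actR (actR m y) y') (actR m (𝔞.comp y y'))
  actL_actR : ∀ {W X Y Z : 𝒰} {f : Y ⟶ Z} {g : X ⟶ Y} {h : W ⟶ X} {B' : 𝔞.Obj W}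
    {B : 𝔞.Obj X} {A : 𝔞.Obj Y} {A' : 𝔞.Obj Z} (x : 𝔞.Hom f A A') (m : M g B A)
    (y : 𝔞.Hom h B' B),
    HEq (actL x (actR m y)) (actR (actL x m) y)

variable {k}

namespace Bimod

variable {𝔞 : GradedCat k 𝒰} (M : Bimod k 𝔞)

/-- Transport of bimodule elements along an equality of underlying morphisms of `𝒰`. -/
def cst {X Y : 𝒰} {f g : X ⟶ Y} (h : f = g) {B : 𝔞.Obj X} {A : 𝔞.Obj Y}
    (m : M.M f B A) : M.M g B A :=
  _root_.cast (by rw [h]) m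

theorem cst_heq {X Y : 𝒰} {f g : X ⟶ Y} (h : f = g) {B : 𝔞.Obj X} {A : 𝔞.Obj Y}
    (m : M.M f B A) : HEq (M.cst h m) m :=
  cast_heq _ _

theorem cst_add {X Y : 𝒰} {f g : X ⟶ Y} (h : f = g) {B : 𝔞.Obj X} {A : 𝔞.Obj Y}
    (m m' : M.M f B A) : M.cst h (m + m') = M.cst h m + M.cst h m' := by
  subst h; rfl

theorem cst_smul {X Y : 𝒰} {f g : X ⟶ Y} (h : f = g) {B : 𝔞.Obj X} {A : 𝔞.Obj Y}
    (r : k) (m : M.M f B A) : M.cst h (r • m) = r • M.cst h m := by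
  subst h; rfl

theorem actL_congr {X Y Z : 𝒰} {f f' : Y ⟶ Z} (hf : f = f') {g g' : X ⟶ Y}
    (hg : g = g') {B : 𝔞.Obj X} {A : 𝔞.Obj Y} {A' : 𝔞.Obj Z} {x : 𝔞.Hom f A A'}
    {x' : 𝔞.Hom f' A A'} (hx : HEq x x') {m : M.M g B A} {m' : M.M g' B A}
    (hm : HEq m m') : HEq (M.actL x m) (M.actL x' m') := by
  subst hf; subst hg; rw [eq_of_heq hx, eq_of_heq hm]

theorem actR_congr {X Y Z : 𝒰} {f f' : Y ⟶ Z} (hf : f = f') {g g' : X ⟶ Y}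
    (hg : g = g') {B' : 𝔞.Obj X} {B : 𝔞.Obj Y} {A : 𝔞.Obj Z} {m : M.M f B A}
    {m' : M.M f' B A} (hm : HEq m m') {y : 𝔞.Hom g B' B} {y' : 𝔞.Hom g' B' B}
    (hy : HEq y y') : HEq (M.actR m y) (M.actR m' y') := by
  subst hf; subst hg; rw [eq_of_heq hm, eq_of_heq hy]

end Bimod

/-- The identity bimodule `1_𝔞`. -/
def GradedCat.unit (𝔞 : GradedCat k 𝒰) : Bimod k 𝔞 where
  M := 𝔞.Hom
  actL := 𝔞.comp
  actR := 𝔞.comp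
  actL_add_left := 𝔞.comp_add_left
  actL_add_right := 𝔞.comp_add_right
  actL_smul_left := 𝔞.comp_smul_left
  actL_smul_right := 𝔞.comp_smul_right
  actR_add_left := 𝔞.comp_add_left
  actR_add_right := 𝔞.comp_add_right
  actR_smul_left := 𝔞.comp_smul_left
  actR_smul_right := 𝔞.comp_smul_right
  actL_id := 𝔞.id_comp
  actR_id := 𝔞.comp_id
  actL_actL x y m := (𝔞.assoc x y m).symm
  actR_actR m y y' := 𝔞.assoc m y y'
  actL_actR x m y := (𝔞.assoc x m y).symm

variable {𝒱 : Type u} [Category.{u} 𝒱]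

/-- The pullback `F*M` of an `𝔞`-bimodule along a graded functor
`(φ, F) : (𝒱, 𝔟) → (𝒰, 𝔞)`: `(F*M)_v(B, B') = M_{φ v}(F B, F B')`. -/
def Bimod.pullback {φ : 𝒱 ⥤ 𝒰} {𝔟 : GradedCat k 𝒱} {𝔞 : GradedCat k 𝒰}
    (F : GradedFunctor k φ 𝔟 𝔞) (M : Bimod k 𝔞) : Bimod k 𝔟 where
  M f B B' := M.M (φ.map f) (F.obj B) (F.obj B')
  actL := fun {X Y Z f g B A A'} x m =>
    M.cst (φ.map_comp g f).symm (M.actL (F.map f x) m)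
  actR := fun {X Y Z f g B' B A} m y =>
    M.cst (φ.map_comp g f).symm (M.actR m (F.map g y))
  actL_add_left := by
    intros; (try dsimp only); rw [F.map_add, M.actL_add_left, M.cst_add]
  actL_add_right := by
    intros; (try dsimp only); rw [M.actL_add_right, M.cst_add]
  actL_smul_left := by
    intros; (try dsimp only); rw [F.map_smul, M.actL_smul_left, M.cst_smul]
  actL_smul_right := by
    intros; (try dsimp only); rw [M.actL_smul_right, M.cst_smul]
  actR_add_left := by
    intros; (try dsimp only); rw [M.actR_add_left, M.cst_add]
  actR_add_right := by
    intros; (try dsimp only); rw [F.map_add, M.actR_add_right, M.cst_add]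
  actR_smul_left := by
    intros; (try dsimp only); rw [M.actR_smul_left, M.cst_smul]
  actR_smul_right := by
    intros; (try dsimp only); rw [F.map_smul, M.actR_smul_right, M.cst_smul]
  actL_id := by
    intro X Y g B A m; try dsimp only
    exact (M.cst_heq _ _).trans
      ((M.actL_congr (φ.map_id _) rfl (F.map_id _) HEq.rfl).trans (M.actL_id m))
  actR_id := by
    intro X Y f B A m; try dsimp only
    exact (M.cst_heq _ _).trans
      ((M.actR_congr rfl (φ.map_id _) HEq.rfl (F.map_id _)).trans (M.actR_id m))
  actL_actL := by
    intro W X Y Z f' f g B A A' A'' x y m; try dsimp only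
    refine ((M.cst_heq _ _).trans ?_).trans (M.cst_heq _ _).symm
    refine ((M.actL_congr rfl (φ.map_comp _ _) HEq.rfl (M.cst_heq _ _)).trans
      (M.actL_actL _ _ _)).trans ?_
    exact M.actL_congr (φ.map_comp _ _).symm rfl (F.map_comp _ _).symm HEq.rfl
  actR_actR := by
    intro W X Y Z f g h B'' B' B A m y y'; try dsimp only
    refine ((M.cst_heq _ _).trans ?_).trans (M.cst_heq _ _).symm
    refine ((M.actR_congr (φ.map_comp _ _) rfl (M.cst_heq _ _) HEq.rfl).trans
      (M.actR_actR _ _ _)).trans ?_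
    exact M.actR_congr rfl (φ.map_comp _ _).symm HEq.rfl (F.map_comp _ _).symm
  actL_actR := by
    intro W X Y Z f g h B' B A A' x m y; try dsimp only
    refine ((M.cst_heq _ _).trans ?_).trans (M.cst_heq _ _).symm
    refine ((M.actL_congr rfl (φ.map_comp _ _) HEq.rfl (M.cst_heq _ _)).trans
      (M.actL_actR _ _ _)).trans ?_
    exact M.actR_congr (φ.map_comp _ _).symm rfl (M.cst_heq _ _).symm HEq.rfl

/-- The functor `𝒱^♯ ⥤ 𝒰^♯` induced by a graded functor. -/
def sharpF {φ : 𝒱 ⥤ 𝒰} {𝔟 : GradedCat k 𝒱} {𝔞 : GradedCat k 𝒰}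
    (F : GradedFunctor k φ 𝔟 𝔞) : Sh 𝔟 ⥤ Sh 𝔞 where
  obj X := ⟨φ.obj X.1, F.obj X.2⟩
  map {X Y} f := φ.map (Sh.base f)
  map_id X := φ.map_id X.1
  map_comp f g := φ.map_comp _ _

/-- The map induced by a graded functor on families of elements over simplices. -/
def eltsMap {φ : 𝒱 ⥤ 𝒰} {𝔟 : GradedCat k 𝒱} {𝔞 : GradedCat k 𝒰}
    (F : GradedFunctor k φ 𝔟 𝔞) :
    ∀ {n : ℕ} {X Y : Sh 𝔟} {p : Pth (Sh 𝔟) n X Y},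
      PthElts 𝔟 p → PthElts 𝔞 (p.map (sharpF F))
  | _, _, _, _, .nil X => .nil _
  | _, _, _, _, .cons x e => .cons (F.map _ x) (eltsMap F e)

/-- The module of raw Hochschild `n`-cochains of `(𝒰, 𝔞)` with values in an
`𝔞`-bimodule `M`: families, indexed by the `n`-simplices `(u, A)` of `𝒩(𝔞)`, of maps
`𝔞_{u_{n-1}} ⊗ ⋯ ⊗ 𝔞_{u_0} → M_{|u|}(A₀, Aₙ)` (multilinearity is the separate
predicate `IsCochain`). -/
abbrev RawCochain {𝔞 : GradedCat k 𝒰} (M : Bimod k 𝔞) (n : ℕ) : Type u :=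
  ∀ (X Y : Sh 𝔞) (p : Pth (Sh 𝔞) n X Y), PthElts 𝔞 p → M.M (Sh.base p.comp) X.2 Y.2

/-- Restriction of Hochschild cochains along a graded functor, with values in the
pullback bimodule: `(F*ψ)_{(v,B)} = ψ_{(φ v, F B)} ∘ F^{⊗n}`. -/
def Fstar {φ : 𝒱 ⥤ 𝒰} {𝔟 : GradedCat k 𝒱} {𝔞 : GradedCat k 𝒰}
    (F : GradedFunctor k φ 𝔟 𝔞) (M : Bimod k 𝔞) {n : ℕ} (c : RawCochain M n) :
    RawCochain (Bimod.pullback F M) n :=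
  fun X Y p e =>
    M.cst (by rw [Pth.comp_map]; rfl) (c _ _ (p.map (sharpF F)) (eltsMap F e))

/-- Restriction of Hochschild cochains (with values in the identity bimodules) along a
subcartesian graded functor: `(F*ψ)_{(v,B)} = F⁻¹ ∘ ψ_{(φ v, F B)} ∘ F^{⊗n}`. -/
noncomputable def FstarUnit {φ : 𝒱 ⥤ 𝒰} {𝔟 : GradedCat k 𝒱} {𝔞 : GradedCat k 𝒰}
    (F : GradedFunctor k φ 𝔟 𝔞) (hF : F.Subcartesian) {n : ℕ}
    (c : RawCochain 𝔞.unit n) : RawCochain 𝔟.unit n :=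
  fun X Y p e =>
    (Equiv.ofBijective _ (hF (Sh.base p.comp) X.2 Y.2)).symm
      ((𝔞.unit).cst (by rw [Pth.comp_map]; rfl) (c _ _ (p.map (sharpF F)) (eltsMap F e)))

section Multilinear

variable {𝔞 : GradedCat k 𝒰} (M : Bimod k 𝔞)

/-- The multilinearity predicate for (relative) Hochschild cochains: additivity and
`k`-homogeneity in the first slot, and, recursively, multilinearity of all partial
evaluations. -/
def IsML : ∀ {n : ℕ} {W : 𝒰} {B : 𝔞.Obj W} {Y : Sh 𝔞} {v : W ⟶ Y.1},
    (∀ (Z : Sh 𝔞) (q : Pth (Sh 𝔞) n Y Z), PthElts 𝔞 q →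
      M.M (v ≫ Sh.base q.comp) B Z.2) → Prop
  | 0, _, _, _, _, _ => True
  | n + 1, W, B, Y, v, c =>
      (∀ (Y' Z : Sh 𝔞) (a : Y ⟶ Y') (q : Pth (Sh 𝔞) n Y' Z) (e : PthElts 𝔞 q)
        (x x' : 𝔞.Hom (Sh.base a) Y.2 Y'.2),
        c Z (.cons a q) (.cons (x + x') e) =
          c Z (.cons a q) (.cons x e) + c Z (.cons a q) (.cons x' e)) ∧
      (∀ (Y' Z : Sh 𝔞) (a : Y ⟶ Y') (q : Pth (Sh 𝔞) n Y' Z) (e : PthElts 𝔞 q) (r : k)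
        (x : 𝔞.Hom (Sh.base a) Y.2 Y'.2),
        c Z (.cons a q) (.cons (r • x) e) = r • c Z (.cons a q) (.cons x e)) ∧
      (∀ (Y' : Sh 𝔞) (a : Y ⟶ Y') (x : 𝔞.Hom (Sh.base a) Y.2 Y'.2),
        IsML (v := v ≫ Sh.base a)
          (fun Z q e => M.cst (by simp) (c Z (.cons a q) (.cons x e))))

/-- A raw cochain, viewed as a relative cochain. -/
def toRel {n : ℕ} (c : RawCochain M n) (X : Sh 𝔞) :
    ∀ (Z : Sh 𝔞) (q : Pth (Sh 𝔞) n X Z), PthElts 𝔞 q →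
      M.M (𝟙 X.1 ≫ Sh.base q.comp) X.2 Z.2 :=
  fun Z q e => M.cst (by simp) (c X Z q e)

/-- A raw cochain is a genuine Hochschild cochain if it is multilinear. -/
def IsCochain {n : ℕ} (c : RawCochain M n) : Prop :=
  ∀ X : Sh 𝔞, IsML M (toRel M c X)

end Multilinear

section Differential

variable {𝔞 : GradedCat k 𝒰}

/-- The inductive core of the Hochschild differential: `χ` is the relative cochain with
the already-consumed prefix applied, and `G` records the evaluation with the last
morphism of the prefix composed into the first remaining slot (initially, the right
action on the source). -/
def hochD (M : Bimod k 𝔞) {W : 𝒰} (B : 𝔞.Obj W) :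
    ∀ {m : ℕ} {Y Z : Sh 𝔞} (v : W ⟶ Y.1)
      (χ : ∀ (Z' : Sh 𝔞) (q : Pth (Sh 𝔞) m Y Z'), PthElts 𝔞 q →
        M.M (v ≫ Sh.base q.comp) B Z'.2)
      (G : ∀ (Y' Z' : Sh 𝔞) (c : Y ⟶ Y') (z : 𝔞.Hom (Sh.base c) Y.2 Y'.2)
        (q : Pth (Sh 𝔞) m Y' Z'), PthElts 𝔞 q →
        M.M (v ≫ (Sh.base c ≫ Sh.base q.comp)) B Z'.2)
      (p : Pth (Sh 𝔞) (m + 1) Y Z) (e : PthElts 𝔞 p),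
      M.M (v ≫ Sh.base p.comp) B Z.2
  | 0, Y, Z, v, χ, G, .cons a (.nil _), .cons x e' =>
      G _ _ a x (.nil _) e' - M.cst (by simp) (M.actL x (χ _ (.nil _) (.nil _)))
  | m + 1, Y, Z, v, χ, G, .cons a q, .cons x e' =>
      G _ _ a x q e' -
        M.cst (by simp)
          (hochD M B (v ≫ Sh.base a)
            (fun Z' r er => M.cst (by simp) (χ Z' (.cons a r) (.cons x er)))
            (fun Y'' Z' c z r er =>
              M.cst (by simp) (χ Z' (.cons (a ≫ c) r) (.cons (𝔞.comp z x) er)))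
            q e')

/-- The simplicial Hochschild differential on raw cochains. -/
def dRaw (M : Bimod k 𝔞) {n : ℕ} (c : RawCochain M n) : RawCochain M (n + 1) :=
  fun X Z p e =>
    M.cst (by simp)
      (hochD M X.2 (𝟙 X.1)
        (fun Z' q eq => M.cst (by simp) (c X Z' q eq))
        (fun Y' Z' a z q eq => M.cst (by simp) (M.actR (c Y' Z' q eq) z))
        p e)

end Differential

end MapGr

/-!
Subcartesianness makes `F` bijective on every graded `Hom`-module, so the elements over a simplex
`F(s)` of `𝒩(𝔞)` are exactly the images of the elements over `s`, and `(F*c)_s` determines the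
component `c_{F(s)}`. Hence `F*` is injective as soon as every `n`-simplex of `𝒩(𝔞)` is some
`F(s)`.

If `𝒩ₙ(F)` is injective, a cochain `c'` of `𝔟` lifts to `𝔞` by putting `c'_s ∘ F⁻¹` at `F(s)` and
`0` off the image. Multilinearity is checked one slot at a time: fixing the first argument at a
morphism `F(a₀)` gives the extension by zero of the corresponding partial evaluation of `c'`
(this uses that `F` is injective on objects, i.e. on `𝒩₀`), while fixing it at a morphism not of
this form gives `0`.
-/

namespace MapGr

namespace Pth

variable {C D : Type u} [Category.{u} C] [Category.{u} D]

theorem exists_eq_cons {m : ℕ} {X Z : C} (r : Pth C (m + 1) X Z) :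
    ∃ (Y : C) (f : X ⟶ Y) (p : Pth C m Y Z), r = .cons f p :=
  match r with | .cons f p => ⟨_, f, p, rfl⟩

def InImage (G : C ⥤ D) (V : C) {m : ℕ} {Z : D} (q : Pth D m (G.obj V) Z) : Prop :=
  ∃ (Z₀ : C) (q₀ : Pth C m V Z₀) (_ : G.obj Z₀ = Z), HEq (q₀.map G) q

theorem InImage.exists_of_cons {G : C ⥤ D} {V : C} {m : ℕ} {Y Z : D} {a : G.obj V ⟶ Y}
    {q : Pth D m Y Z} (h : InImage G V (.cons a q)) :
    ∃ (V' : C) (a₀ : V ⟶ V') (Z₀ : C) (q₀ : Pth C m V' Z₀) (_ : G.obj V' = Y)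
      (_ : G.obj Z₀ = Z), HEq (G.map a₀) a ∧ HEq (q₀.map G) q := by
  obtain ⟨Z₀, r, rfl, hr⟩ := h
  obtain ⟨V', a₀, q₀, rfl⟩ := exists_eq_cons r
  injection eq_of_heq hr with _ _ hY _ ha hq
  exact ⟨V', a₀, Z₀, q₀, hY, rfl, ha, hq⟩

theorem InImage.of_cons_map {G : C ⥤ D} (hG : Function.Injective G.obj) {V V' : C}
    {m : ℕ} {Z : D} {a₀ : V ⟶ V'} {q : Pth D m (G.obj V') Z}
    (h : InImage G V (.cons (G.map a₀) q)) : InImage G V' q := by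
  obtain ⟨V₁, -, Z₀, q₀, hV, hZ, -, hq⟩ := h.exists_of_cons
  obtain rfl := hG hV
  exact ⟨Z₀, q₀, hZ, hq⟩

end Pth

namespace NerveTot

variable {C D : Type u} [Category.{u} C] [Category.{u} D]

theorem mk_eq_mk_iff {m : ℕ} {X Y X' Y' : C} {p : Pth C m X Y} {p' : Pth C m X' Y'} :
    (⟨X, Y, p⟩ : NerveTot C m) = ⟨X', Y', p'⟩ ↔ X = X' ∧ Y = Y' ∧ HEq p p' := by
  constructor
  · rintro ⟨⟩; exact ⟨rfl, rfl, HEq.rfl⟩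
  · rintro ⟨rfl, rfl, h⟩; rw [eq_of_heq h]

theorem injective_obj_of_injective_map (G : C ⥤ D)
    (h : Function.Injective (NerveTot.map G : NerveTot C 0 → NerveTot D 0)) :
    Function.Injective G.obj := fun V V' hV =>
  congrArg Sigma.fst <| @h ⟨V, V, .nil V⟩ ⟨V', V', .nil V'⟩ <|
    congrArg (fun U => (⟨U, U, .nil U⟩ : NerveTot D 0)) hV

end NerveTot

section

variable {k : Type u} [CommRing k] {𝒱 𝒰 : Type u} [Category.{u} 𝒱] [Category.{u} 𝒰]
  {φ : 𝒱 ⥤ 𝒰} {𝔟 : GradedCat k 𝒱} {𝔞 : GradedCat k 𝒰}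

namespace GradedFunctor

variable (F : GradedFunctor k φ 𝔟 𝔞) (hF : F.Subcartesian)

noncomputable def preimage {V V' : 𝒱} (f : V ⟶ V') {B : 𝔟.Obj V} {B' : 𝔟.Obj V'}
    (x : 𝔞.Hom (φ.map f) (F.obj B) (F.obj B')) : 𝔟.Hom f B B' :=
  (Equiv.ofBijective _ (hF f B B')).symm x

variable {F} {V V' : 𝒱} (f : V ⟶ V') {B : 𝔟.Obj V} {B' : 𝔟.Obj V'}

theorem map_preimage (x : 𝔞.Hom (φ.map f) (F.obj B) (F.obj B')) :
    F.map f (F.preimage hF f x) = x :=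
  (Equiv.ofBijective _ (hF f B B')).apply_symm_apply x

theorem preimage_map (x : 𝔟.Hom f B B') : F.preimage hF f (F.map f x) = x :=
  (Equiv.ofBijective _ (hF f B B')).symm_apply_apply x

theorem preimage_add (x y : 𝔞.Hom (φ.map f) (F.obj B) (F.obj B')) :
    F.preimage hF f (x + y) = F.preimage hF f x + F.preimage hF f y :=
  (hF f B B').1 <| by simp only [F.map_add, map_preimage]

theorem preimage_smul (r : k) (x : 𝔞.Hom (φ.map f) (F.obj B) (F.obj B')) :
    F.preimage hF f (r • x) = r • F.preimage hF f x :=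
  (hF f B B').1 <| by simp only [F.map_smul, map_preimage]

end GradedFunctor

namespace PthElts

variable {m : ℕ} {X Y Z : Sh 𝔞} {f : X ⟶ Y} {p : Pth (Sh 𝔞) m Y Z}

theorem eq_nil (e : PthElts 𝔞 (Pth.nil X)) : e = .nil X :=
  match e with | .nil _ => rfl

theorem exists_eq_cons (e : PthElts 𝔞 (Pth.cons f p)) :
    ∃ (x : 𝔞.Hom (Sh.base f) X.2 Y.2) (e' : PthElts 𝔞 p), e = .cons x e' :=
  match e with | .cons x e' => ⟨x, e', rfl⟩

def head (e : PthElts 𝔞 (Pth.cons f p)) : 𝔞.Hom (Sh.base f) X.2 Y.2 :=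
  match e with | .cons x _ => x

def tail (e : PthElts 𝔞 (Pth.cons f p)) : PthElts 𝔞 p :=
  match e with | .cons _ e' => e'

end PthElts

section EltsPreimage

variable (F : GradedFunctor k φ 𝔟 𝔞) (hF : F.Subcartesian)

noncomputable def eltsPreimage : ∀ {m : ℕ} {X Y : Sh 𝔟} (p : Pth (Sh 𝔟) m X Y),
    PthElts 𝔞 (p.map (sharpF F)) → PthElts 𝔟 p
  | _, _, _, .nil X => fun _ => .nil X
  | _, _, _, .cons f p => fun e =>
      .cons (F.preimage hF (Sh.base f) e.head) (eltsPreimage p e.tail)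

variable {m : ℕ} {X Y : Sh 𝔟} (p : Pth (Sh 𝔟) m X Y)

theorem eltsMap_eltsPreimage (e : PthElts 𝔞 (p.map (sharpF F))) :
    eltsMap F (eltsPreimage F hF p e) = e := by
  induction p with
  | nil X => exact (PthElts.eq_nil e).symm
  | cons f p ih =>
    obtain ⟨x, e, rfl⟩ := PthElts.exists_eq_cons e
    exact congrArg₂ PthElts.cons (F.map_preimage hF (Sh.base f) x) (ih e)

theorem eltsPreimage_eltsMap (e : PthElts 𝔟 p) : eltsPreimage F hF p (eltsMap F e) = e := by
  induction e with
  | nil X => rfl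
  | cons x e ih => exact congrArg₂ PthElts.cons (F.preimage_map hF _ x) ih

end EltsPreimage

theorem Bimod.cst_zero (M : Bimod k 𝔞) {X Y : 𝒰} {f g : X ⟶ Y} (h : f = g) {B : 𝔞.Obj X}
    {A : 𝔞.Obj Y} : M.cst h (0 : M.M f B A) = 0 := by
  subst h; rfl

theorem Bimod.cst_injective (M : Bimod k 𝔞) {X Y : 𝒰} {f g : X ⟶ Y} (h : f = g)
    {B : 𝔞.Obj X} {A : 𝔞.Obj Y} : Function.Injective (M.cst h : M.M f B A → M.M g B A) :=
  fun _ _ => cast_inj _ |>.1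

theorem isML_of_forall_eq_zero (M : Bimod k 𝔞) : ∀ {m : ℕ} {W : 𝒰} {B : 𝔞.Obj W}
    {Y : Sh 𝔞} {v : W ⟶ Y.1}
    (χ : ∀ (Z : Sh 𝔞) (q : Pth (Sh 𝔞) m Y Z), PthElts 𝔞 q →
      M.M (v ≫ Sh.base q.comp) B Z.2),
    (∀ Z q e, χ Z q e = 0) → IsML M χ
  | 0, _, _, _, _, _, _ => trivial
  | _ + 1, _, _, _, _, χ, h =>
    ⟨fun _ _ _ _ _ _ _ => by rw [h, h, h, add_zero],
     fun _ _ _ _ _ _ _ => by rw [h, h, smul_zero],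
     fun _ _ _ => isML_of_forall_eq_zero M _ fun _ _ _ => by rw [h]; exact M.cst_zero _⟩

def evalHead (M : Bimod k 𝔞) {m : ℕ} {W : 𝒰} {B : 𝔞.Obj W} {Y Y' : Sh 𝔞}
    {v : W ⟶ Y.1}
    (χ : ∀ (Z : Sh 𝔞) (q : Pth (Sh 𝔞) (m + 1) Y Z), PthElts 𝔞 q →
      M.M (v ≫ Sh.base q.comp) B Z.2)
    (a : Y ⟶ Y') (x : 𝔞.Hom (Sh.base a) Y.2 Y'.2) :
    ∀ (Z : Sh 𝔞) (q : Pth (Sh 𝔞) m Y' Z), PthElts 𝔞 q →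
      M.M ((v ≫ Sh.base a) ≫ Sh.base q.comp) B Z.2 :=
  fun Z q e => M.cst (by simp) (χ Z (.cons a q) (.cons x e))

section ExtensionByZero

variable (F : GradedFunctor k φ 𝔟 𝔞) (hF : F.Subcartesian) {M : Bimod k 𝔞}

/-- Of two relative cochains as in `IsML`, `ξ` on the paths of `𝔟` from `V` and `χ` on the
paths of `𝔞` from `F V`: `χ` is `ξ` transported along `F` on the image paths, and `0` off them. -/
structure IsExtensionByZero {m : ℕ} {W : 𝒱} {B : 𝔟.Obj W} {V : Sh 𝔟} {v₀ : W ⟶ V.1}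
    {v : φ.obj W ⟶ φ.obj V.1} (hv : v = φ.map v₀)
    (ξ : ∀ (Z₀ : Sh 𝔟) (q₀ : Pth (Sh 𝔟) m V Z₀), PthElts 𝔟 q₀ →
      (Bimod.pullback F M).M (v₀ ≫ Sh.base q₀.comp) B Z₀.2)
    (χ : ∀ (Z : Sh 𝔞) (q : Pth (Sh 𝔞) m ((sharpF F).obj V) Z), PthElts 𝔞 q →
      M.M (v ≫ Sh.base q.comp) (F.obj B) Z.2) : Prop where
  map_eq : ∀ (Z₀ : Sh 𝔟) (q₀ : Pth (Sh 𝔟) m V Z₀)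
    (e : PthElts 𝔞 (q₀.map (sharpF F))), χ _ (q₀.map (sharpF F)) e =
      M.cst (by rw [hv, Pth.comp_map, φ.map_comp]; rfl) (ξ Z₀ q₀ (eltsPreimage F hF q₀ e))
  eq_zero : ∀ (Z : Sh 𝔞) (q : Pth (Sh 𝔞) m ((sharpF F).obj V) Z) (e : PthElts 𝔞 q),
    ¬ q.InImage (sharpF F) V → χ Z q e = 0

variable {F hF}

namespace IsExtensionByZero

variable {m : ℕ} {W : 𝒱} {B : 𝔟.Obj W} {V : Sh 𝔟} {v₀ : W ⟶ V.1}
  {v : φ.obj W ⟶ φ.obj V.1} {hv : v = φ.map v₀}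
  {ξ : ∀ (Z₀ : Sh 𝔟) (q₀ : Pth (Sh 𝔟) (m + 1) V Z₀), PthElts 𝔟 q₀ →
    (Bimod.pullback F M).M (v₀ ≫ Sh.base q₀.comp) B Z₀.2}
  {χ : ∀ (Z : Sh 𝔞) (q : Pth (Sh 𝔞) (m + 1) ((sharpF F).obj V) Z), PthElts 𝔞 q →
    M.M (v ≫ Sh.base q.comp) (F.obj B) Z.2}

theorem map_add_head (h : IsExtensionByZero F hF hv ξ χ) (hξ : IsML _ ξ) {Y Z : Sh 𝔞}
    (a : (sharpF F).obj V ⟶ Y) (q : Pth (Sh 𝔞) m Y Z) (e : PthElts 𝔞 q)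
    (x x' : 𝔞.Hom (Sh.base a) (F.obj V.2) Y.2) :
    χ Z (.cons a q) (.cons (x + x') e) =
      χ Z (.cons a q) (.cons x e) + χ Z (.cons a q) (.cons x' e) := by
  by_cases hq : (Pth.cons a q).InImage (sharpF F) V
  · obtain ⟨V', a₀, Z₀, q₀, rfl, rfl, ha, hq₀⟩ := hq.exists_of_cons
    obtain rfl := eq_of_heq ha
    obtain rfl := eq_of_heq hq₀
    refine (h.map_eq Z₀ (.cons a₀ q₀) (.cons (x + x') e)).trans <| Eq.trans ?_ <|
      (congrArg₂ (· + ·) (h.map_eq Z₀ (.cons a₀ q₀) (.cons x e))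
        (h.map_eq Z₀ (.cons a₀ q₀) (.cons x' e))).symm
    refine .trans ?_ (M.cst_add _ _ _)
    congr 1
    exact (congrArg (fun y => ξ Z₀ _ (.cons y (eltsPreimage F hF q₀ e)))
      (F.preimage_add hF _ x x')).trans (hξ.1 V' Z₀ a₀ q₀ _ _ _)
  · rw [h.eq_zero _ _ _ hq, h.eq_zero _ _ _ hq, h.eq_zero _ _ _ hq, add_zero]

theorem map_smul_head (h : IsExtensionByZero F hF hv ξ χ) (hξ : IsML _ ξ) {Y Z : Sh 𝔞}
    (a : (sharpF F).obj V ⟶ Y) (q : Pth (Sh 𝔞) m Y Z) (e : PthElts 𝔞 q) (r : k)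
    (x : 𝔞.Hom (Sh.base a) (F.obj V.2) Y.2) :
    χ Z (.cons a q) (.cons (r • x) e) = r • χ Z (.cons a q) (.cons x e) := by
  by_cases hq : (Pth.cons a q).InImage (sharpF F) V
  · obtain ⟨V', a₀, Z₀, q₀, rfl, rfl, ha, hq₀⟩ := hq.exists_of_cons
    obtain rfl := eq_of_heq ha
    obtain rfl := eq_of_heq hq₀
    refine (h.map_eq Z₀ (.cons a₀ q₀) (.cons (r • x) e)).trans <| Eq.trans ?_ <|
      (congrArg (r • ·) (h.map_eq Z₀ (.cons a₀ q₀) (.cons x e))).symm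
    refine .trans ?_ (M.cst_smul _ _ _)
    congr 1
    exact (congrArg (fun y => ξ Z₀ _ (.cons y (eltsPreimage F hF q₀ e)))
      (F.preimage_smul hF _ r x)).trans (hξ.2.1 V' Z₀ a₀ q₀ _ r _)
  · rw [h.eq_zero _ _ _ hq, h.eq_zero _ _ _ hq, smul_zero]

theorem evalHead_map (hG : Function.Injective (sharpF F).obj)
    (h : IsExtensionByZero F hF hv ξ χ) {V' : Sh 𝔟} (a₀ : V ⟶ V')
    (x : 𝔞.Hom (φ.map (Sh.base a₀)) (F.obj V.2) (F.obj V'.2)) :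
    IsExtensionByZero F hF (v₀ := v₀ ≫ Sh.base a₀) (v := v ≫ Sh.base ((sharpF F).map a₀))
      (by rw [hv, φ.map_comp]; rfl)
      (evalHead (Bimod.pullback F M) ξ a₀ (F.preimage hF _ x))
      (evalHead M χ ((sharpF F).map a₀) x) where
  map_eq Z₀ q₀ e := eq_of_heq <|
    ((M.cst_heq _ _).trans ((heq_of_eq (h.map_eq Z₀ (.cons a₀ q₀) (.cons x e))).trans
      (M.cst_heq _ _))).trans
    ((M.cst_heq _ _).trans ((Bimod.pullback F M).cst_heq _ _)).symm
  eq_zero _ _ _ hq :=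
    (congrArg (M.cst _) (h.eq_zero _ _ _ fun hq' => hq (hq'.of_cons_map hG))).trans
      (M.cst_zero _)

theorem evalHead_eq_zero (h : IsExtensionByZero F hF hv ξ χ) {Y : Sh 𝔞}
    {a : (sharpF F).obj V ⟶ Y}
    (ha : ¬ ∃ (V' : Sh 𝔟) (a₀ : V ⟶ V') (_ : (sharpF F).obj V' = Y),
      HEq ((sharpF F).map a₀) a)
    (x : 𝔞.Hom (Sh.base a) (F.obj V.2) Y.2) (Z : Sh 𝔞) (q : Pth (Sh 𝔞) m Y Z)
    (e : PthElts 𝔞 q) : evalHead M χ a x Z q e = 0 := by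
  refine (congrArg (M.cst _) (h.eq_zero _ _ _ fun hq => ha ?_)).trans (M.cst_zero _)
  obtain ⟨V', a₀, -, -, hY, -, ha₀, -⟩ := hq.exists_of_cons
  exact ⟨V', a₀, hY, ha₀⟩

end IsExtensionByZero

theorem IsExtensionByZero.isML (hG : Function.Injective (sharpF F).obj) {m : ℕ} :
    ∀ {W : 𝒱} {B : 𝔟.Obj W} {V : Sh 𝔟} {v₀ : W ⟶ V.1} {v : φ.obj W ⟶ φ.obj V.1}
      {hv : v = φ.map v₀}
      {ξ : ∀ (Z₀ : Sh 𝔟) (q₀ : Pth (Sh 𝔟) m V Z₀), PthElts 𝔟 q₀ →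
        (Bimod.pullback F M).M (v₀ ≫ Sh.base q₀.comp) B Z₀.2}
      {χ : ∀ (Z : Sh 𝔞) (q : Pth (Sh 𝔞) m ((sharpF F).obj V) Z), PthElts 𝔞 q →
        M.M (v ≫ Sh.base q.comp) (F.obj B) Z.2},
      IsExtensionByZero F hF hv ξ χ → IsML _ ξ → IsML M χ := by
  induction m with
  | zero => intros; trivial
  | succ m ih =>
    intro W B V v₀ v hv ξ χ h hξ
    refine ⟨fun _ _ a q e x x' => h.map_add_head hξ a q e x x',
      fun _ _ a q e r x => h.map_smul_head hξ a q e r x, fun Y a x => ?_⟩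
    by_cases ha : ∃ (V' : Sh 𝔟) (a₀ : V ⟶ V') (_ : (sharpF F).obj V' = Y),
      HEq ((sharpF F).map a₀) a
    · obtain ⟨V', a₀, rfl, ha₀⟩ := ha
      obtain rfl := eq_of_heq ha₀
      exact ih (h.evalHead_map hG a₀ x) (hξ.2.2 V' a₀ _)
    · exact isML_of_forall_eq_zero M _ (h.evalHead_eq_zero ha x)

end ExtensionByZero

theorem Fstar_injective (F : GradedFunctor k φ 𝔟 𝔞) (hF : F.Subcartesian) (M : Bimod k 𝔞)
    {n : ℕ} (hsurj : Function.Surjective (NerveTot.map (sharpF F) : NerveTot (Sh 𝔟) n → _)) :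
    Function.Injective (Fstar F M : RawCochain M n → _) := by
  intro c c' h
  funext X Y p e
  obtain ⟨⟨X₀, Y₀, q⟩, hs⟩ := hsurj ⟨X, Y, p⟩
  obtain ⟨rfl, rfl, hq⟩ := NerveTot.mk_eq_mk_iff.1 hs
  obtain rfl := eq_of_heq hq
  have := M.cst_injective _ (congrFun (congrFun (congrFun (congrFun h X₀) Y₀) q)
    (eltsPreimage F hF q e))
  rwa [eltsMap_eltsPreimage] at this

section Lift

def CochainComponent (M : Bimod k 𝔞) {n : ℕ} (t : NerveTot (Sh 𝔞) n) : Type u :=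
  PthElts 𝔞 t.2.2 → M.M (Sh.base t.2.2.comp) t.1.2 t.2.1.2

variable (F : GradedFunctor k φ 𝔟 𝔞) (hF : F.Subcartesian) (M : Bimod k 𝔞) {n : ℕ}

noncomputable def liftComponent (c' : RawCochain (Bimod.pullback F M) n)
    (s : NerveTot (Sh 𝔟) n) : CochainComponent M (NerveTot.map (sharpF F) s) :=
  fun e => M.cst (Pth.comp_map (sharpF F) s.2.2).symm
    (c' s.1 s.2.1 s.2.2 (eltsPreimage F hF s.2.2 e))

open Classical in
noncomputable def liftCochain (c' : RawCochain (Bimod.pullback F M) n) : RawCochain M n :=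
  fun X Z p e =>
    if h : ∃ s, NerveTot.map (sharpF F) s = ⟨X, Z, p⟩ then
      cast (congrArg (CochainComponent M) h.choose_spec) (liftComponent F hF M c' h.choose) e
    else 0

variable {F hF M} (c' : RawCochain (Bimod.pullback F M) n)

theorem liftCochain_eq_zero {X Z : Sh 𝔞} {p : Pth (Sh 𝔞) n X Z}
    (h : ¬ ∃ s, NerveTot.map (sharpF F) s = ⟨X, Z, p⟩) (e : PthElts 𝔞 p) :
    liftCochain F hF M c' X Z p e = 0 := by
  unfold liftCochain
  rw [dif_neg h]

theorem liftCochain_map_heq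
    (hinj : Function.Injective (NerveTot.map (sharpF F) : NerveTot (Sh 𝔟) n → _))
    {X Y : Sh 𝔟} (q : Pth (Sh 𝔟) n X Y) (e : PthElts 𝔞 (q.map (sharpF F))) :
    HEq (liftCochain F hF M c' _ _ (q.map (sharpF F)) e)
      (c' X Y q (eltsPreimage F hF q e)) := by
  have hs : ∃ s, NerveTot.map (sharpF F) s =
      ⟨(sharpF F).obj X, (sharpF F).obj Y, q.map (sharpF F)⟩ := ⟨⟨X, Y, q⟩, rfl⟩
  suffices ∀ s (h : NerveTot.map (sharpF F) s = NerveTot.map (sharpF F) ⟨X, Y, q⟩),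
      HEq (cast (congrArg (CochainComponent M) h) (liftComponent F hF M c' s) e)
        (c' X Y q (eltsPreimage F hF q e)) by
    unfold liftCochain
    rw [dif_pos hs]
    exact this _ hs.choose_spec
  intro s h
  obtain rfl := hinj h
  rw [cast_eq]
  exact M.cst_heq _ _

theorem Fstar_liftCochain
    (hinj : Function.Injective (NerveTot.map (sharpF F) : NerveTot (Sh 𝔟) n → _)) :
    Fstar F M (liftCochain F hF M c') = c' := by
  funext X Y q e
  refine eq_of_heq <| (M.cst_heq _ _).trans <| (liftCochain_map_heq c' hinj q _).trans ?_
  rw [eltsPreimage_eltsMap]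

theorem isExtensionByZero_liftCochain
    (hG : Function.Injective (sharpF F).obj)
    (hinj : Function.Injective (NerveTot.map (sharpF F) : NerveTot (Sh 𝔟) n → _))
    (X : Sh 𝔟) :
    IsExtensionByZero F hF (φ.map_id X.1).symm (toRel _ c' X)
      (toRel M (liftCochain F hF M c') ((sharpF F).obj X)) where
  map_eq _ q e := eq_of_heq <|
    ((M.cst_heq _ _).trans (liftCochain_map_heq c' hinj q e)).trans
      ((M.cst_heq _ _).trans ((Bimod.pullback F M).cst_heq _ _)).symm
  eq_zero Z q e hq := by
    refine (congrArg (M.cst _) (liftCochain_eq_zero c' ?_ e)).trans (M.cst_zero _)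
    rintro ⟨⟨X', Z', q'⟩, hs⟩
    obtain ⟨hX, hZ, hq'⟩ := NerveTot.mk_eq_mk_iff.1 hs
    obtain rfl := hG hX
    exact hq ⟨Z', q', hZ, hq'⟩

theorem isCochain_liftCochain (hG : Function.Injective (sharpF F).obj)
    (hinj : Function.Injective (NerveTot.map (sharpF F) : NerveTot (Sh 𝔟) n → _))
    (hc' : IsCochain _ c') : IsCochain M (liftCochain F hF M c') := by
  intro X
  by_cases hX : ∃ X₀, (sharpF F).obj X₀ = X
  · obtain ⟨X₀, rfl⟩ := hX
    exact (isExtensionByZero_liftCochain c' hG hinj X₀).isML hG (hc' X₀)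
  · refine isML_of_forall_eq_zero M _ fun Z q e =>
      (congrArg (M.cst _) (liftCochain_eq_zero c' ?_ e)).trans (M.cst_zero _)
    rintro ⟨s, hs⟩
    exact hX ⟨s.1, congrArg Sigma.fst hs⟩

end Lift

end

/-- Let `(φ, F) : (𝒱, 𝔟) → (𝒰, 𝔞)` be a subcartesian graded functor, `M` an
`𝔞`-bimodule and `n ∈ ℕ`.  Call `(φ, F)` `n`-injective (resp. `n`-surjective) if the
induced maps `𝒩ₖ(F) : 𝒩ₖ(𝔟) → 𝒩ₖ(𝔞)` on `k`-simplices of the nerves are injective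
(resp. surjective) for all `k ≤ n`.  Then:
(1) if `(φ, F)` is `n`-injective, `(F*)ⁿ : Cⁿ_𝒰(𝔞, M) → Cⁿ_𝒱(𝔟, F*M)` is surjective;
(2) if `(φ, F)` is `n`-surjective, `(F*)ⁿ` is injective. -/
theorem statement13 {k : Type u} [CommRing k] {𝒱 𝒰 : Type u} [Category.{u} 𝒱]
    [Category.{u} 𝒰] {φ : 𝒱 ⥤ 𝒰} {𝔟 : GradedCat k 𝒱} {𝔞 : GradedCat k 𝒰}
    (F : GradedFunctor k φ 𝔟 𝔞) (hF : F.Subcartesian) (M : Bimod k 𝔞) (n : ℕ) :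
    ((∀ m ≤ n, Function.Injective
        (fun s : NerveTot (Sh 𝔟) m => NerveTot.map (sharpF F) s)) →
      ∀ c' : RawCochain (Bimod.pullback F M) n, IsCochain (Bimod.pullback F M) c' →
        ∃ c : RawCochain M n, IsCochain M c ∧ Fstar F M c = c') ∧
    ((∀ m ≤ n, Function.Surjective
        (fun s : NerveTot (Sh 𝔟) m => NerveTot.map (sharpF F) s)) →
      ∀ c c' : RawCochain M n, IsCochain M c → IsCochain M c' →
        Fstar F M c = Fstar F M c' → c = c') := by
  refine ⟨fun hinj c' hc' => ?_,
    fun hsurj _ _ _ _ h => Fstar_injective F hF M (hsurj n le_rfl) h⟩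
  have hG := NerveTot.injective_obj_of_injective_map (sharpF F) (hinj 0 n.zero_le)
  exact ⟨liftCochain F hF M c', isCochain_liftCochain c' hG (hinj n le_rfl) hc',
    Fstar_liftCochain c' (hinj n le_rfl)⟩

end MapGr
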